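/- Let G be a finite simple graph and v ∈ ker(G). Then ker(G − v) ⊆ ker(G) \ {v}. -/

import Mathlib

open Finset

namespace CritGraph

variable {V : Type*} [Fintype V] [DecidableEq V]

/-- The neighborhood of a set of vertices `X`:
all vertices having at least one neighbor in `X`. -/
def nbhd (G : SimpleGraph V) [DecidableRel G.Adj] (X : Finset V) : Finset V :=
  univ.filter fun v => ∃ x ∈ X, G.Adj v x

/-- The difference `d(X) = |X| - |N(X)|` of a set of vertices `X`. -/
def diff (G : SimpleGraph V) [DecidableRel G.Adj] (X : Finset V) : ℤ :=
  (X.card : ℤ) - ((nbhd G X).card : ℤ)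

/-- A set of vertices is independent if no two of its vertices are adjacent. -/
def IsIndep (G : SimpleGraph V) (S : Finset V) : Prop :=
  ∀ u ∈ S, ∀ v ∈ S, ¬ G.Adj u v

instance (G : SimpleGraph V) [DecidableRel G.Adj] : DecidablePred (IsIndep G) := fun S =>
  inferInstanceAs (Decidable (∀ u ∈ S, ∀ v ∈ S, ¬ G.Adj u v))

/-- The critical difference `d_c(G) = max {d(X) : X ⊆ V}`. -/
def dC (G : SimpleGraph V) [DecidableRel G.Adj] : ℤ :=
  (univ : Finset V).powerset.sup' (Finset.powerset_nonempty _) (diff G)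

/-- The critical independence difference `id_c(G) = max {d(I) : I independent}`. -/
def idC (G : SimpleGraph V) [DecidableRel G.Adj] : ℤ :=
  ((univ : Finset V).powerset.filter (IsIndep G)).sup'
    ⟨∅, by simp [IsIndep]⟩ (diff G)

/-- `A` is a critical independent set: `A` is independent and
`d(A) = max {d(I) : I independent}`. -/
def IsCritIndep (G : SimpleGraph V) [DecidableRel G.Adj] (A : Finset V) : Prop :=
  IsIndep G A ∧ ∀ I : Finset V, IsIndep G I → diff G I ≤ diff G A

instance (G : SimpleGraph V) [DecidableRel G.Adj] : DecidablePred (IsCritIndep G) := fun A =>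
  inferInstanceAs (Decidable (IsIndep G A ∧ ∀ I : Finset V, IsIndep G I → diff G I ≤ diff G A))

/-- `ker(G)`: the intersection of all critical independent sets of `G`. -/
def kerG (G : SimpleGraph V) [DecidableRel G.Adj] : Finset V :=
  univ.filter fun v => ∀ A : Finset V, IsCritIndep G A → v ∈ A

/-- `G - v`: the induced subgraph of `G` on `V \ {v}`. -/
def deleteVert (G : SimpleGraph V) (v : V) : SimpleGraph {u : V // u ≠ v} :=
  G.comap Subtype.val

instance (G : SimpleGraph V) (v : V) [DecidableRel G.Adj] :
    DecidableRel (deleteVert G v).Adj := fun a b =>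
  inferInstanceAs (Decidable (G.Adj a.val b.val))

/-- `S` is an inclusion-minimal independent set with positive difference. -/
def MinPosIndep (G : SimpleGraph V) [DecidableRel G.Adj] (S : Finset V) : Prop :=
  IsIndep G S ∧ 0 < diff G S ∧ ∀ S' ⊂ S, ¬ (IsIndep G S' ∧ 0 < diff G S')

/-- `S` is a maximum independent set. -/
def IsMaxIndep (G : SimpleGraph V) (S : Finset V) : Prop :=
  IsIndep G S ∧ ∀ I : Finset V, IsIndep G I → I.card ≤ S.card

instance (G : SimpleGraph V) [DecidableRel G.Adj] : DecidablePred (IsMaxIndep G) := fun S =>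
  inferInstanceAs (Decidable (IsIndep G S ∧ ∀ I : Finset V, IsIndep G I → I.card ≤ S.card))

/-- `core(G)`: the intersection of all maximum independent sets of `G`. -/
def coreG (G : SimpleGraph V) [DecidableRel G.Adj] : Finset V :=
  univ.filter fun v => ∀ A : Finset V, IsMaxIndep G A → v ∈ A

/-!
Every critical independent set `A` of `G` contains `v`, and `A \ {v}` is critical independent in
`G - v`, so `ker(G - v) ⊆ A \ {v}`. Indeed `d_{G-v}(A \ {v}) ≥ d(A) - 1 = idC G - 1`, whereas an
independent set `I` of `G - v` has `d_{G-v}(I) = d_G(I) + [v ∈ N(I)]`. Since `v ∉ I` and `v` lies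
in every critical set, `d_G(I) < idC G`; and if `v ∈ N(I)`, supermodularity of `d` against a
critical set even gives `d_G(I) ≤ idC G - 2`.
-/

section Difference

variable {G : SimpleGraph V} [DecidableRel G.Adj]

omit [DecidableEq V] in
lemma mem_nbhd {X : Finset V} {w : V} : w ∈ nbhd G X ↔ ∃ x ∈ X, G.Adj w x := by
  simp [nbhd]

omit [DecidableEq V] in
lemma nbhd_mono {X Y : Finset V} (h : X ⊆ Y) : nbhd G X ⊆ nbhd G Y := fun _ hw =>
  let ⟨x, hx, hadj⟩ := mem_nbhd.1 hw
  mem_nbhd.2 ⟨x, h hx, hadj⟩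

lemma nbhd_union (X Y : Finset V) : nbhd G (X ∪ Y) = nbhd G X ∪ nbhd G Y := by
  ext w
  simp only [mem_nbhd, mem_union, or_and_right, exists_or]

omit [Fintype V] [DecidableEq V] [DecidableRel G.Adj] in
lemma IsIndep.mono {S T : Finset V} (hT : IsIndep G T) (h : S ⊆ T) : IsIndep G S :=
  fun a ha b hb => hT a (h ha) b (h hb)

omit [DecidableEq V] in
lemma IsIndep.notMem_nbhd {S : Finset V} {w : V} (hS : IsIndep G S) (hw : w ∈ S) :
    w ∉ nbhd G S := fun h =>
  let ⟨x, hx, hadj⟩ := mem_nbhd.1 h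
  hS w hw x hx hadj

lemma isIndep_sdiff_nbhd (X : Finset V) : IsIndep G (X \ nbhd G X) := fun _ ha b hb hadj =>
  (mem_sdiff.1 ha).2 (mem_nbhd.2 ⟨b, (mem_sdiff.1 hb).1, hadj⟩)

/-- The vertices of `X ∩ N(X)` lie in `N(X)` but not in `N(X \ N(X))`. -/
lemma diff_le_diff_sdiff_nbhd (X : Finset V) : diff G X ≤ diff G (X \ nbhd G X) := by
  have hdisj : Disjoint (nbhd G (X \ nbhd G X)) (X ∩ nbhd G X) := by
    refine disjoint_left.2 fun w hw hwX => ?_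
    obtain ⟨y, hy, hadj⟩ := mem_nbhd.1 hw
    exact (mem_sdiff.1 hy).2 (mem_nbhd.2 ⟨w, (mem_inter.1 hwX).1, hadj.symm⟩)
  have hle : #(nbhd G (X \ nbhd G X)) + #(X ∩ nbhd G X) ≤ #(nbhd G X) := by
    rw [← card_union_of_disjoint hdisj]
    exact card_le_card (union_subset (nbhd_mono sdiff_subset) inter_subset_right)
  have hcard := card_sdiff_add_card_inter X (nbhd G X)
  unfold diff
  omega

lemma diff_add_diff_le_diff_union_add_diff_inter (X Y : Finset V) :
    diff G X + diff G Y ≤ diff G (X ∪ Y) + diff G (X ∩ Y) := by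
  have hX := card_union_add_card_inter X Y
  have hN := card_union_add_card_inter (nbhd G X) (nbhd G Y)
  have hinter : #(nbhd G (X ∩ Y)) ≤ #(nbhd G X ∩ nbhd G Y) :=
    card_le_card (subset_inter (nbhd_mono inter_subset_left) (nbhd_mono inter_subset_right))
  rw [← nbhd_union] at hN
  unfold diff
  omega

lemma diff_sub_one_le_diff_erase (X : Finset V) (v : V) : diff G X - 1 ≤ diff G (X.erase v) := by
  have hX := pred_card_le_card_erase (s := X) (a := v)
  have hN := card_le_card (nbhd_mono (G := G) (erase_subset v X))
  unfold diff
  omega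

end Difference

section Critical

variable {G : SimpleGraph V} [DecidableRel G.Adj]

lemma diff_le_idC {I : Finset V} (hI : IsIndep G I) : diff G I ≤ idC G :=
  le_sup' (diff G) (mem_filter.2 ⟨mem_powerset.2 (subset_univ I), hI⟩)

variable (G) in
lemma exists_isIndep_diff_eq_idC : ∃ B, IsIndep G B ∧ diff G B = idC G := by
  obtain ⟨B, hB, hBeq⟩ := exists_mem_eq_sup' (⟨∅, by simp [IsIndep]⟩ :
    ((univ : Finset V).powerset.filter (IsIndep G)).Nonempty) (diff G)
  exact ⟨B, (mem_filter.1 hB).2, hBeq.symm⟩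

lemma isCritIndep_iff {A : Finset V} : IsCritIndep G A ↔ IsIndep G A ∧ diff G A = idC G := by
  refine ⟨fun hA => ⟨hA.1, le_antisymm (diff_le_idC hA.1) ?_⟩,
    fun ⟨hA, hd⟩ => ⟨hA, fun I hI => hd ▸ diff_le_idC hI⟩⟩
  obtain ⟨B, hB, hBeq⟩ := exists_isIndep_diff_eq_idC G
  exact hBeq ▸ hA.2 B hB

variable (G) in
lemma exists_isCritIndep : ∃ A, IsCritIndep G A :=
  let ⟨B, hB, hBeq⟩ := exists_isIndep_diff_eq_idC G
  ⟨B, isCritIndep_iff.2 ⟨hB, hBeq⟩⟩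

lemma IsCritIndep.mem_of_mem_kerG {A : Finset V} {w : V} (hA : IsCritIndep G A)
    (hw : w ∈ kerG G) : w ∈ A :=
  (mem_filter.1 hw).2 A hA

lemma diff_lt_idC_of_notMem {I : Finset V} {w : V} (hw : w ∈ kerG G) (hI : IsIndep G I)
    (hwI : w ∉ I) : diff G I < idC G :=
  (diff_le_idC hI).lt_of_ne fun h => hwI ((isCritIndep_iff.2 ⟨hI, h⟩).mem_of_mem_kerG hw)

lemma diff_lt_idC_of_mem_nbhd {X : Finset V} {w : V} (hw : w ∈ kerG G) (hX : w ∈ nbhd G X) :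
    diff G X < idC G :=
  (diff_le_diff_sdiff_nbhd X).trans_lt
    (diff_lt_idC_of_notMem hw (isIndep_sdiff_nbhd X) fun h => (mem_sdiff.1 h).2 hX)

/-- Supermodularity against a critical set `A`: both `A ∪ X` and `A ∩ X` have difference below
`idC G`, the first because `w ∈ N(A ∪ X)`, the second because `w ∉ A ∩ X`. -/
lemma diff_add_two_le_idC {X : Finset V} {w : V} (hw : w ∈ kerG G) (hwX : w ∉ X)
    (hwN : w ∈ nbhd G X) : diff G X + 2 ≤ idC G := by
  obtain ⟨A, hA⟩ := exists_isCritIndep G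
  have hunion : diff G (A ∪ X) < idC G :=
    diff_lt_idC_of_mem_nbhd hw (nbhd_mono subset_union_right hwN)
  have hinter : diff G (A ∩ X) < idC G :=
    diff_lt_idC_of_notMem hw (hA.1.mono inter_subset_left) fun h => hwX (mem_inter.1 h).2
  have hsuper := diff_add_diff_le_diff_union_add_diff_inter (G := G) A X
  have hA_diff := (isCritIndep_iff.1 hA).2
  omega

end Critical

section Deletion

variable {G : SimpleGraph V} [DecidableRel G.Adj] {v : V}

omit [Fintype V] [DecidableRel G.Adj] in
lemma isIndep_deleteVert_iff {S : Finset {u : V // u ≠ v}} :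
    IsIndep (deleteVert G v) S ↔ IsIndep G (S.image Subtype.val) := by
  simp [IsIndep, deleteVert]

lemma nbhd_deleteVert (S : Finset {u : V // u ≠ v}) :
    nbhd (deleteVert G v) S = (nbhd G (S.image Subtype.val)).subtype (· ≠ v) := by
  ext w
  simp only [mem_subtype, mem_nbhd, mem_image]
  constructor
  · rintro ⟨x, hx, hadj⟩
    exact ⟨x, ⟨x, hx, rfl⟩, hadj⟩
  · rintro ⟨_, ⟨x, hx, rfl⟩, hadj⟩
    exact ⟨x, hx, hadj⟩

lemma diff_deleteVert (S : Finset {u : V // u ≠ v}) :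
    diff (deleteVert G v) S =
      diff G (S.image Subtype.val) + if v ∈ nbhd G (S.image Subtype.val) then 1 else 0 := by
  rw [diff, diff, card_image_of_injective _ Subtype.val_injective, nbhd_deleteVert, card_subtype,
    filter_ne']
  split_ifs with h
  · rw [card_erase_of_mem h, Nat.cast_sub (card_pos.2 ⟨v, h⟩)]
    ring
  · rw [erase_eq_of_notMem h]
    ring

lemma diff_deleteVert_add_one_le_idC (hv : v ∈ kerG G) {S : Finset {u : V // u ≠ v}}
    (hS : IsIndep (deleteVert G v) S) : diff (deleteVert G v) S + 1 ≤ idC G := by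
  have hI := isIndep_deleteVert_iff.1 hS
  have hvI : v ∉ S.image Subtype.val := fun h =>
    let ⟨u, _, hu⟩ := mem_image.1 h
    u.2 hu
  rw [diff_deleteVert]
  split_ifs with hvN
  · linarith [diff_add_two_le_idC hv hvI hvN]
  · linarith [diff_lt_idC_of_notMem hv hI hvI]

lemma IsCritIndep.subtype_deleteVert (hv : v ∈ kerG G) {A : Finset V} (hA : IsCritIndep G A) :
    IsCritIndep (deleteVert G v) (A.subtype (· ≠ v)) := by
  have himage : (A.subtype (· ≠ v)).image Subtype.val = A.erase v := by
    ext u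
    simp [and_comm]
  have hvN : v ∉ nbhd G (A.erase v) := fun h =>
    hA.1.notMem_nbhd (hA.mem_of_mem_kerG hv) (nbhd_mono (erase_subset v A) h)
  refine ⟨isIndep_deleteVert_iff.2 (himage ▸ hA.1.mono (erase_subset v A)), fun I hI => ?_⟩
  have hdiff : diff (deleteVert G v) (A.subtype (· ≠ v)) = diff G (A.erase v) := by
    rw [diff_deleteVert, himage, if_neg hvN, add_zero]
  linarith [diff_deleteVert_add_one_le_idC hv hI, diff_sub_one_le_diff_erase (G := G) A v,
    (isCritIndep_iff.1 hA).2]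

end Deletion

/-- If `v ∈ ker(G)`, then `ker(G - v) ⊆ ker(G) \ {v}`. -/
theorem kerG_deleteVert_subset (G : SimpleGraph V) [DecidableRel G.Adj]
    (v : V) (hv : v ∈ kerG G) :
    (kerG (deleteVert G v)).image Subtype.val ⊆ kerG G \ {v} := by
  rintro _ hu
  obtain ⟨u, hu_ker, rfl⟩ := mem_image.1 hu
  refine mem_sdiff.2 ⟨mem_filter.2 ⟨mem_univ _, fun A hA => ?_⟩, notMem_singleton.2 u.2⟩
  exact mem_subtype.1 ((hA.subtype_deleteVert hv).mem_of_mem_kerG hu_ker)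

end CritGraph
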